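/- Let λ > 0 and let f : (0,∞) → ℝ be a generalized Stieltjes function of order λ, say f(x) = C + ∫_{[0,∞)} (x+t)^{-λ} dρ(t) with C ≥ 0 and ρ a nonnegative Borel measure on [0,∞) whose integral converges for all x > 0. Then for all integers n, k ≥ 0 and all x > 0, F^{[λ]}_{n,k}(x) = (Γ(n+k+λ)/Γ(λ)) · [ C·δ_{n,0} + ∫_{[0,∞)} t^k/(x+t)^{n+k+λ} dρ(t) ], where δ_{n,0} equals 1 if n = 0 and 0 otherwise; in particular F^{[λ]}_{n,k}(x) ≥ 0. -/

import Mathlib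

/-!
Differentiating under the integral sign (dominated convergence, the kernel being decreasing in
`x` for `t ≥ 0`) gives `f^{(m)}(x) = C δ_{m,0} + (-1)^m (Γ(m+λ)/Γ(λ)) ∫ (x+t)^{-(m+λ)} dρ(t)`.
In `F^{[λ]}_{n,k}` the Gamma factors then collapse to `Γ(n+k+λ)/Γ(λ)`, the signs to `(-1)^j`, and
the binomial theorem sums `Σ_j C(k,j) (-x)^j (x+t)^{-(n+j+λ)}` to `((x+t) - x)^k / (x+t)^{n+k+λ}`.
-/

open MeasureTheory Set Filter

/-- `F^{[λ]}_{n,k}(x) = (−1)^n Σ_{j=0}^{k} C(k,j) (Γ(n+k+λ)/Γ(n+j+λ)) x^j f^{(n+j)}(x)`. -/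
noncomputable def Fgen (lam : ℝ) (f : ℝ → ℝ) (n k : ℕ) (x : ℝ) : ℝ :=
  (-1 : ℝ) ^ n * ∑ j ∈ Finset.range (k + 1),
    (k.choose j : ℝ) * (Real.Gamma ((n : ℝ) + k + lam) / Real.Gamma ((n : ℝ) + j + lam)) *
      x ^ j * iteratedDerivWithin (n + j) f (Set.Ioi 0) x

lemma Fgen_eq_of_iteratedDerivWithin_eq {lam C x : ℝ} {f : ℝ → ℝ} {I : ℕ → ℝ} (hlam : 0 < lam)
    (hD : ∀ m : ℕ, iteratedDerivWithin m f (Ioi 0) x =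
      (if m = 0 then C else 0) + (-1) ^ m * (Real.Gamma (m + lam) / Real.Gamma lam) * I m)
    (n k : ℕ) :
    Fgen lam f n k x = Real.Gamma ((n : ℝ) + k + lam) / Real.Gamma lam *
      ((if n = 0 then C else 0) +
        ∑ j ∈ Finset.range (k + 1), (k.choose j : ℝ) * (-x) ^ j * I (n + j)) := by
  have hterm : ∀ j ∈ Finset.range (k + 1), (-1 : ℝ) ^ n * ((k.choose j : ℝ) *
      (Real.Gamma ((n : ℝ) + k + lam) / Real.Gamma ((n : ℝ) + j + lam)) * x ^ j *
        iteratedDerivWithin (n + j) f (Ioi 0) x) =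
      Real.Gamma ((n : ℝ) + k + lam) / Real.Gamma lam *
        ((if n + j = 0 then C else 0) + (k.choose j : ℝ) * (-x) ^ j * I (n + j)) := by
    intro j _
    have hΓ : Real.Gamma ((n : ℝ) + j + lam) ≠ 0 := (Real.Gamma_pos_of_pos (by positivity)).ne'
    rw [hD, Nat.cast_add]
    split_ifs with h
    · obtain ⟨rfl, rfl⟩ := Nat.add_eq_zero_iff.mp h
      simp only [Nat.cast_zero, zero_add, pow_zero, Nat.choose_zero_right, Nat.cast_one, one_mul,
        mul_one]
      field_simp
    · have hsign : (-1 : ℝ) ^ n * (-1) ^ (n + j) = (-1) ^ j := by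
        rw [pow_add, ← mul_assoc, ← mul_pow]
        norm_num
      rw [neg_pow x, ← hsign]
      field_simp
      ring
  have hdelta : ∑ j ∈ Finset.range (k + 1), (if n + j = 0 then C else 0) =
      if n = 0 then C else 0 := by
    rw [Finset.sum_eq_single 0 (fun j _ hj => by simp [hj]) (by simp)]
    simp
  rw [Fgen, Finset.mul_sum, Finset.sum_congr rfl hterm, ← Finset.mul_sum, Finset.sum_add_distrib,
    hdelta]

lemma sum_choose_mul_neg_pow_mul_rpow_neg {u : ℝ} (hu : 0 < u) (x s : ℝ) (k : ℕ) :
    ∑ j ∈ Finset.range (k + 1), (k.choose j : ℝ) * (-x) ^ j * u ^ (-(s + j)) =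
      (u - x) ^ k * u ^ (-(s + k)) := by
  have hsplit : ∀ j ∈ Finset.range (k + 1), (k.choose j : ℝ) * (-x) ^ j * u ^ (-(s + j)) =
      (-x) ^ j * u ^ (k - j) * (k.choose j : ℝ) * u ^ (-(s + k)) := by
    intro j hj
    have hjk : j ≤ k := Nat.lt_succ_iff.mp (Finset.mem_range.mp hj)
    have hpow : u ^ (-(s + j)) = u ^ ((k - j : ℕ) : ℝ) * u ^ (-(s + k)) := by
      rw [← Real.rpow_add hu, Nat.cast_sub hjk]
      ring_nf
    rw [hpow, Real.rpow_natCast]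
    ring
  rw [Finset.sum_congr rfl hsplit, ← Finset.sum_mul, ← add_pow, neg_add_eq_sub]

section StieltjesKernel

variable {ρ : Measure ℝ}

lemma ae_nonneg_of_measure_Iio_eq_zero (hsupp : ρ (Iio 0) = 0) : ∀ᵐ t ∂ρ, 0 ≤ t := by
  filter_upwards [measure_eq_zero_iff_ae_notMem.mp hsupp] with t ht
  simpa using ht

lemma integrable_add_rpow_neg_of_le (hsupp : ρ (Iio 0) = 0) {x lam μ : ℝ} (hx : 0 < x)
    (hint : Integrable (fun t => (x + t) ^ (-lam)) ρ) (hμ : lam ≤ μ) :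
    Integrable (fun t => (x + t) ^ (-μ)) ρ := by
  refine (hint.const_mul (x ^ (lam - μ))).mono'
    (by fun_prop : Measurable fun t => (x + t) ^ (-μ)).aestronglyMeasurable ?_
  filter_upwards [ae_nonneg_of_measure_Iio_eq_zero hsupp] with t ht
  have hxt : 0 < x + t := by linarith
  rw [Real.norm_of_nonneg (Real.rpow_nonneg hxt.le _)]
  calc (x + t) ^ (-μ) = (x + t) ^ (lam - μ) * (x + t) ^ (-lam) := by
        rw [← Real.rpow_add hxt]; ring_nf
    _ ≤ x ^ (lam - μ) * (x + t) ^ (-lam) := by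
        gcongr ?_ * _
        exact Real.rpow_le_rpow_of_nonpos hx (by linarith) (by linarith)

/-- For `-1 ≤ μ` the derivative `(y + t) ^ (-(μ + 1))` decreases in `y`, so on the ball
`|y - x| < x / 2` it is dominated by its value at `x / 2`. -/
lemma hasDerivAt_integral_add_rpow_neg (hsupp : ρ (Iio 0) = 0) {μ : ℝ} (hμ : -1 ≤ μ)
    (hint : ∀ y > (0 : ℝ), Integrable (fun t => (y + t) ^ (-μ)) ρ) {x : ℝ} (hx : 0 < x) :
    HasDerivAt (fun y => ∫ t, (y + t) ^ (-μ) ∂ρ) (-μ * ∫ t, (x + t) ^ (-(μ + 1)) ∂ρ) x := by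
  have hx2 : 0 < x / 2 := by linarith
  have hbound : Integrable (fun t => |μ| * (x / 2 + t) ^ (-(μ + 1))) ρ :=
    (integrable_add_rpow_neg_of_le hsupp hx2 (hint _ hx2) (by linarith)).const_mul _
  have key := hasDerivAt_integral_of_dominated_loc_of_deriv_le (Metric.ball_mem_nhds x hx2)
    (F := fun y t => (y + t) ^ (-μ)) (F' := fun y t => -μ * (y + t) ^ (-(μ + 1)))
    (Eventually.of_forall fun _ => (by fun_prop : Measurable _).aestronglyMeasurable)
    (hint x hx) (by fun_prop : Measurable _).aestronglyMeasurable ?_ hbound ?_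
  · simpa only [integral_const_mul] using key.2
  all_goals
    filter_upwards [ae_nonneg_of_measure_Iio_eq_zero hsupp] with t ht y hy
    have hy' : x / 2 < y := by
      rw [Metric.mem_ball, Real.dist_eq, abs_lt] at hy; linarith
  · rw [norm_mul, norm_neg, Real.norm_eq_abs,
      Real.norm_of_nonneg (Real.rpow_nonneg (by linarith) _)]
    gcongr _ * ?_
    exact Real.rpow_le_rpow_of_nonpos (by linarith) (by linarith) (by linarith)
  · refine (((hasDerivAt_id' y).add_const t).rpow_const (p := -μ)
      (Or.inl (by linarith))).congr_deriv ?_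
    ring_nf

lemma iteratedDerivWithin_Ioi_eq_of_eq_const_add_integral {lam C : ℝ} {f : ℝ → ℝ}
    (hlam : 0 < lam) (hsupp : ρ (Iio 0) = 0)
    (hint : ∀ x > (0 : ℝ), Integrable (fun t => (x + t) ^ (-lam)) ρ)
    (hf : ∀ x > (0 : ℝ), f x = C + ∫ t, (x + t) ^ (-lam) ∂ρ) (m : ℕ) {x : ℝ} (hx : 0 < x) :
    iteratedDerivWithin m f (Ioi 0) x = (if m = 0 then C else 0) +
      (-1) ^ m * (Real.Gamma (m + lam) / Real.Gamma lam) * ∫ t, (x + t) ^ (-(m + lam)) ∂ρ := by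
  induction m generalizing x with
  | zero => simp [hf x hx, (Real.Gamma_pos_of_pos hlam).ne']
  | succ m ih =>
    have hml : 0 < m + lam := by positivity
    have hder : HasDerivAt (fun y => (if m = 0 then C else 0) +
        (-1) ^ m * (Real.Gamma (m + lam) / Real.Gamma lam) * ∫ t, (y + t) ^ (-(m + lam)) ∂ρ)
        ((-1) ^ m * (Real.Gamma (m + lam) / Real.Gamma lam) *
          (-(m + lam) * ∫ t, (x + t) ^ (-(m + lam + 1)) ∂ρ)) x :=
      ((hasDerivAt_integral_add_rpow_neg hsupp (by linarith)
        (fun y hy => integrable_add_rpow_neg_of_le hsupp hy (hint y hy) (by linarith))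
        hx).const_mul _).const_add _
    have hcast : ((m + 1 : ℕ) : ℝ) + lam = m + lam + 1 := by push_cast; ring
    rw [iteratedDerivWithin_succ, ((hder.hasDerivWithinAt (s := Ioi 0)).congr (fun y hy => ih hy)
      (ih hx)).derivWithin (uniqueDiffOn_Ioi 0 x hx), hcast,
      Real.Gamma_add_one hml.ne', if_neg m.succ_ne_zero, pow_succ]
    ring

lemma sum_choose_mul_neg_pow_mul_integral (hsupp : ρ (Iio 0) = 0) {lam x : ℝ} (hx : 0 < x)
    (hint : Integrable (fun t => (x + t) ^ (-lam)) ρ) (n k : ℕ) :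
    ∑ j ∈ Finset.range (k + 1),
        (k.choose j : ℝ) * (-x) ^ j * ∫ t, (x + t) ^ (-(((n + j : ℕ) : ℝ) + lam)) ∂ρ =
      ∫ t, t ^ k / (x + t) ^ ((n : ℝ) + k + lam) ∂ρ := by
  have hcast : ∀ j : ℕ, ((n + j : ℕ) : ℝ) + lam = (n + lam) + j := fun j => by push_cast; ring
  simp only [hcast, ← integral_const_mul]
  rw [← integral_finsetSum _ fun j _ => (integrable_add_rpow_neg_of_le hsupp hx hint
    (by linarith [(n.cast_nonneg : (0 : ℝ) ≤ n), (j.cast_nonneg : (0 : ℝ) ≤ j)])).const_mul _]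
  refine integral_congr_ae ?_
  filter_upwards [ae_nonneg_of_measure_Iio_eq_zero hsupp] with t ht
  have hxt : 0 < x + t := by linarith
  rw [sum_choose_mul_neg_pow_mul_rpow_neg hxt, add_sub_cancel_left, Real.rpow_neg hxt.le,
    div_eq_mul_inv]
  ring_nf

end StieltjesKernel

/-- if `f(x) = C + ∫_{[0,∞)} (x+t)^{-λ} dρ(t)` with `C ≥ 0` and `ρ ≥ 0`
(integral finite for all `x > 0`), then for all `n, k ≥ 0` and `x > 0`,
`F^{[λ]}_{n,k}(x) = (Γ(n+k+λ)/Γ(λ)) [ C δ_{n,0} + ∫ t^k/(x+t)^{n+k+λ} dρ(t) ]`,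
and in particular `F^{[λ]}_{n,k}(x) ≥ 0`. -/
theorem stmt19 (lam : ℝ) (hlam : 0 < lam) (f : ℝ → ℝ) (C : ℝ) (ρ : Measure ℝ)
    (hC : 0 ≤ C) (hsupp : ρ (Set.Iio 0) = 0)
    (hint : ∀ x > (0 : ℝ), Integrable (fun t => (x + t) ^ (-lam)) ρ)
    (hf : ∀ x > (0 : ℝ), f x = C + ∫ t, (x + t) ^ (-lam) ∂ρ) :
    ∀ (n k : ℕ), ∀ x > (0 : ℝ),
      Fgen lam f n k x =
          Real.Gamma ((n : ℝ) + k + lam) / Real.Gamma lam *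
            ((if n = 0 then C else 0) +
              ∫ t, t ^ k / (x + t) ^ ((n : ℝ) + k + lam) ∂ρ) ∧
        0 ≤ Fgen lam f n k x := by
  intro n k x hx
  have hF : Fgen lam f n k x = Real.Gamma ((n : ℝ) + k + lam) / Real.Gamma lam *
      ((if n = 0 then C else 0) + ∫ t, t ^ k / (x + t) ^ ((n : ℝ) + k + lam) ∂ρ) := by
    rw [Fgen_eq_of_iteratedDerivWithin_eq hlam
        (fun m => iteratedDerivWithin_Ioi_eq_of_eq_const_add_integral hlam hsupp hint hf m hx),
      sum_choose_mul_neg_pow_mul_integral hsupp hx (hint x hx)]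
  have hδ : 0 ≤ (if n = 0 then C else 0) := by split_ifs <;> simp [hC]
  have hI : 0 ≤ ∫ t, t ^ k / (x + t) ^ ((n : ℝ) + k + lam) ∂ρ :=
    integral_nonneg_of_ae <| (ae_nonneg_of_measure_Iio_eq_zero hsupp).mono fun t ht =>
      div_nonneg (pow_nonneg ht k) (Real.rpow_nonneg (by linarith) _)
  have hΓ : 0 < Real.Gamma ((n : ℝ) + k + lam) := Real.Gamma_pos_of_pos (by positivity)
  exact ⟨hF, hF ▸ by positivity⟩
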